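/- Let P be an n×m complex matrix, let R_R and R_C be m×m positive semidefinite complex matrices, and let η > 0 be real. Set T = I_n + η P (R_R + R_C) P^H, T̃ = I_n + η P R_C P^H, and let R_R^{1/2} denote the (Hermitian) PSD square root of R_R. Then T and T̃ are invertible and have positive real determinants, the matrix I_m − η R_R^{1/2} P^H T^{−1} P R_R^{1/2} has positive real determinant, and log det(I_n + η P (R_R + R_C) P^H) − log det(I_n + η P R_C P^H) = − log det(I_m − η R_R^{1/2} P^H T^{−1} P R_R^{1/2}). -/

import Mathlib

open Matrix
open scoped ComplexOrder

/-- The positive semidefinite square root of a positive semidefinite matrix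
(the definition removed from Mathlib, restored verbatim). -/
noncomputable def Matrix.PosSemidef.sqrt {n 𝕜 : Type*} [Fintype n] [DecidableEq n] [RCLike 𝕜]
    {A : Matrix n n 𝕜} (hA : A.PosSemidef) : Matrix n n 𝕜 :=
  hA.1.eigenvectorUnitary.1 * diagonal ((↑) ∘ Real.sqrt ∘ hA.1.eigenvalues) *
  (star hA.1.eigenvectorUnitary : Matrix n n 𝕜)

lemma psd_smul_conj {n m : ℕ} (P : Matrix (Fin n) (Fin m) ℂ) (M : Matrix (Fin m) (Fin m) ℂ)
    (hM : M.PosSemidef) (η : ℝ) (hη : 0 < η) :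
    ((η : ℂ) • (P * M * Pᴴ)).PosSemidef := by
  have h := hM.mul_mul_conjTranspose_same ((Real.sqrt η : ℂ) • P)
  have : ((Real.sqrt η : ℂ) • P) * M * ((Real.sqrt η : ℂ) • P)ᴴ = (η : ℂ) • (P * M * Pᴴ) := by
    rw [conjTranspose_smul]
    simp [smul_mul_assoc, mul_smul_comm, smul_smul, ← Complex.ofReal_mul,
      Real.mul_self_sqrt hη.le]
  rwa [this] at h

lemma psd_sqrt_mul_self {m : ℕ} {A : Matrix (Fin m) (Fin m) ℂ} (hA : A.PosSemidef) :
    hA.sqrt * hA.sqrt = A := by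
  have hU : (star hA.1.eigenvectorUnitary : Matrix (Fin m) (Fin m) ℂ) * hA.1.eigenvectorUnitary.1 = 1 :=
    Unitary.star_mul_self_of_mem hA.1.eigenvectorUnitary.2
  have hD : diagonal (((↑) : ℝ → ℂ) ∘ Real.sqrt ∘ hA.1.eigenvalues) *
      diagonal (((↑) : ℝ → ℂ) ∘ Real.sqrt ∘ hA.1.eigenvalues)
      = diagonal (RCLike.ofReal ∘ hA.1.eigenvalues) := by
    rw [diagonal_mul_diagonal]
    congr 1
    funext i
    simp only [Function.comp_apply, ← Complex.ofReal_mul,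
      Real.mul_self_sqrt (hA.eigenvalues_nonneg i)]
    rfl
  conv_rhs => rw [hA.1.spectral_theorem]
  rw [Unitary.conjStarAlgAut_apply, Matrix.PosSemidef.sqrt]
  calc _ = hA.1.eigenvectorUnitary.1 * diagonal (((↑) : ℝ → ℂ) ∘ Real.sqrt ∘ hA.1.eigenvalues) *
        ((star hA.1.eigenvectorUnitary : Matrix (Fin m) (Fin m) ℂ) * hA.1.eigenvectorUnitary.1) *
        diagonal (((↑) : ℝ → ℂ) ∘ Real.sqrt ∘ hA.1.eigenvalues) *
        (star hA.1.eigenvectorUnitary : Matrix (Fin m) (Fin m) ℂ) := by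
          simp only [Matrix.mul_assoc]; rfl
    _ = _ := by rw [hU, Matrix.mul_one, Matrix.mul_assoc _ _ (diagonal _), hD]

/-- The reformulation (30) of the clutter-corrupted sensing mutual information:
with `T = I + η P (R_R + R_C) Pᴴ` and `T̃ = I + η P R_C Pᴴ`, both are invertible
with positive real determinants, `I − η R_R^{1/2} Pᴴ T⁻¹ P R_R^{1/2}` has positive
real determinant, and
`log det T − log det T̃ = − log det(I − η R_R^{1/2} Pᴴ T⁻¹ P R_R^{1/2})`. -/
theorem mi_reformulation {n m : ℕ} (P : Matrix (Fin n) (Fin m) ℂ)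
    (RR RC : Matrix (Fin m) (Fin m) ℂ) (hRR : RR.PosSemidef) (hRC : RC.PosSemidef)
    (η : ℝ) (hη : 0 < η)
    (T Tt : Matrix (Fin n) (Fin n) ℂ)
    (hT : T = 1 + (η : ℂ) • (P * (RR + RC) * Pᴴ))
    (hTt : Tt = 1 + (η : ℂ) • (P * RC * Pᴴ)) :
    IsUnit T ∧ IsUnit Tt ∧ 0 < T.det ∧ 0 < Tt.det ∧
    0 < ((1 : Matrix (Fin m) (Fin m) ℂ)
          - (η : ℂ) • (hRR.sqrt * Pᴴ * T⁻¹ * P * hRR.sqrt)).det ∧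
    Complex.log T.det - Complex.log Tt.det
      = - Complex.log (((1 : Matrix (Fin m) (Fin m) ℂ)
          - (η : ℂ) • (hRR.sqrt * Pᴴ * T⁻¹ * P * hRR.sqrt)).det) := by
  set S := hRR.sqrt with hS
  set K := (1 : Matrix (Fin m) (Fin m) ℂ) - (η : ℂ) • (S * Pᴴ * T⁻¹ * P * S) with hK
  -- positivity of T, Tt
  have hTpd : T.PosDef := by
    rw [hT]
    exact Matrix.PosDef.one.add_posSemidef
      (psd_smul_conj P _ (hRR.add hRC) η hη)
  have hTtpd : Tt.PosDef := by
    rw [hTt]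
    exact Matrix.PosDef.one.add_posSemidef (psd_smul_conj P _ hRC η hη)
  have hTu : IsUnit T := hTpd.isUnit
  have hTtu : IsUnit Tt := hTtpd.isUnit
  have hTdet : 0 < T.det := hTpd.det_pos
  have hTtdet : 0 < Tt.det := hTtpd.det_pos
  -- S * S = RR
  have hSS : S * S = RR := psd_sqrt_mul_self hRR
  -- key determinant identity: T.det * K.det = Tt.det
  have hkey : T.det * K.det = Tt.det := by
    have h1 : K = 1 + (S * Pᴴ) * (-((η : ℂ) • (T⁻¹ * P * S))) := by
      rw [hK]
      simp only [Matrix.mul_neg, Matrix.mul_smul, Matrix.mul_assoc, sub_eq_add_neg]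
    have h2 : K.det = (1 + (-((η : ℂ) • (T⁻¹ * P * S))) * (S * Pᴴ)).det := by
      rw [h1, Matrix.det_one_add_mul_comm]
    have h3 : (1 : Matrix (Fin n) (Fin n) ℂ) + (-((η : ℂ) • (T⁻¹ * P * S))) * (S * Pᴴ)
        = 1 - (η : ℂ) • (T⁻¹ * (P * RR * Pᴴ)) := by
      rw [← hSS]
      simp only [Matrix.neg_mul, Matrix.smul_mul, Matrix.mul_assoc, sub_eq_add_neg]
    have h4 : T * (1 - (η : ℂ) • (T⁻¹ * (P * RR * Pᴴ))) = Tt := by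
      rw [Matrix.mul_sub, Matrix.mul_one, mul_smul_comm, ← Matrix.mul_assoc,
        Matrix.mul_nonsing_inv T ((Matrix.isUnit_iff_isUnit_det T).mp hTu),
        Matrix.one_mul, hT, hTt]
      rw [Matrix.mul_add, Matrix.add_mul]
      rw [smul_add]
      abel
    rw [h2, h3, ← Matrix.det_mul, h4]
  -- express determinants as positive reals
  obtain ⟨ha, ha'⟩ := Complex.lt_def.mp hTdet
  obtain ⟨hb, hb'⟩ := Complex.lt_def.mp hTtdet
  simp only [Complex.zero_re, Complex.zero_im] at ha ha' hb hb'
  have hTeq : T.det = ((T.det.re : ℝ) : ℂ) := Complex.ext rfl ha'.symm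
  have hTteq : Tt.det = ((Tt.det.re : ℝ) : ℂ) := Complex.ext rfl hb'.symm
  have hKeq : K.det = (((Tt.det.re / T.det.re : ℝ)) : ℂ) := by
    have hTne : T.det ≠ 0 := hTdet.ne'
    rw [Complex.ofReal_div, ← hTeq, ← hTteq, ← hkey, mul_comm, mul_div_assoc,
      div_self hTne, mul_one]
  have hKpos : 0 < K.det := by
    rw [hKeq]
    exact Complex.zero_lt_real.mpr (div_pos hb ha)
  refine ⟨hTu, hTtu, hTdet, hTtdet, hKpos, ?_⟩
  rw [hTeq, hTteq, hKeq, ← Complex.ofReal_log ha.le, ← Complex.ofReal_log hb.le,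
    ← Complex.ofReal_log (div_pos hb ha).le, ← Complex.ofReal_sub, ← Complex.ofReal_neg]
  congr 1
  rw [Real.log_div hb.ne' ha.ne']
  ring
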